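/- Let v_a solve v'' + h(t) f(v) = 0 on (0, R₁) with v_a(0) = 0, v_a'(0⁺) = a > 0, and suppose v_a > 0 on (0, t₀] for some t₀ ∈ (0, R₁]. Then 0 < v_a(t) ≤ a t on (0, t₀], and if C > 0 is a constant with g₁(s) ≥ -C for all s ∈ [0, a R₁], then for all t ∈ (0, t₀]: v_a(t) ≤ a t − h₀ t^{2−α̃−q} / (a^q (1−α̃−q)(2−α̃−q)) + C h₁ t^{2−α̃} / ((1−α̃)(2−α̃)) (with h₀, h₁ the constants from the bound h₀ t^{-α̃} ≤ h(t) ≤ h₁ t^{-α̃}). -/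

import Mathlib

/-!
Since `f > 0` on `(0, ∞)`, `v` is concave on `[0, t₀]` and therefore lies below its tangent `a t`
at `0`. Knowing `0 < v ≤ a t`, hypothesis (H2) gives
`v'' = -h (v^(-q) + g₁ v) ≤ -h₀ a^(-q) t^(-α̃-q) + C h₁ t^(-α̃)`, and integrating twice from `0`
yields the bound: the difference between `v` and the twice-integrated right-hand side is concave,
vanishes at `0` and has slope `0` there, so it is nonpositive.
-/

open Real Set Filter Topology

theorem ConcaveOn.nonpos_of_slope_tendsto_zero {w : ℝ → ℝ} {b t : ℝ}
    (hw : ConcaveOn ℝ (Icc 0 b) w) (hw0 : w 0 = 0)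
    (hslope : Tendsto (fun s => w s / s) (𝓝[>] 0) (𝓝 0)) (ht : t ∈ Ioc 0 b) : w t ≤ 0 := by
  have hdiv : w t / t ≤ 0 := by
    refine ge_of_tendsto hslope ?_
    filter_upwards [Ioo_mem_nhdsGT ht.1] with s hs
    have hsecant := hw.neg.secant_mono (left_mem_Icc.2 (ht.1.le.trans ht.2))
      ⟨hs.1.le, hs.2.le.trans ht.2⟩ ⟨ht.1.le, ht.2⟩ hs.1.ne' ht.1.ne' hs.2.le
    simp only [Pi.neg_apply, hw0, neg_zero, sub_zero, neg_div] at hsecant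
    linarith
  simpa using (div_le_iff₀ ht.1).1 hdiv

theorem le_of_hasDerivAt2_le {b t : ℝ} {v v' v'' φ φ' φ'' : ℝ → ℝ}
    (hv : ContinuousOn v (Icc 0 b)) (hφ : ContinuousOn φ (Icc 0 b)) (h0 : v 0 = φ 0)
    (hslope : Tendsto (fun s => (v s - φ s) / s) (𝓝[>] 0) (𝓝 0))
    (hv' : ∀ s ∈ Ioo 0 b, HasDerivAt v (v' s) s) (hv'' : ∀ s ∈ Ioo 0 b, HasDerivAt v' (v'' s) s)
    (hφ' : ∀ s ∈ Ioo 0 b, HasDerivAt φ (φ' s) s) (hφ'' : ∀ s ∈ Ioo 0 b, HasDerivAt φ' (φ'' s) s)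
    (hle : ∀ s ∈ Ioo 0 b, v'' s ≤ φ'' s) (ht : t ∈ Ioc 0 b) : v t ≤ φ t := by
  have hconc : ConcaveOn ℝ (Icc 0 b) (v - φ) := by
    refine concaveOn_of_hasDerivWithinAt2_nonpos (f' := v' - φ') (f'' := v'' - φ'')
      (convex_Icc 0 b) (hv.sub hφ) ?_ ?_ ?_ <;> rw [interior_Icc] <;> intro s hs
    · exact ((hv' s hs).sub (hφ' s hs)).hasDerivWithinAt
    · exact ((hv'' s hs).sub (hφ'' s hs)).hasDerivWithinAt
    · exact sub_nonpos.2 (hle s hs)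
  exact sub_nonpos.1 (hconc.nonpos_of_slope_tendsto_zero (sub_eq_zero.2 h0) hslope ht)

theorem hasDerivAt_div_mul_rpow (c : ℝ) {e t : ℝ} (he : e ≠ 0) (ht : 0 < t) :
    HasDerivAt (fun x => c / e * x ^ e) (c * t ^ (e - 1)) t :=
  ((hasDerivAt_rpow_const (p := e) (Or.inl ht.ne')).const_mul (c / e)).congr_deriv (by field_simp)

theorem tendsto_rpow_nhdsGT_zero {e : ℝ} (he : 0 < e) :
    Tendsto (fun x : ℝ => x ^ e) (𝓝[>] 0) (𝓝 0) :=
  ((continuous_rpow_const he.le).tendsto' 0 0 (zero_rpow he.ne')).mono_left nhdsWithin_le_nhds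

/-- The right-hand side solves `φ'' = -A t^(β-2) + B t^(γ-2)`, `φ(0) = 0`, `φ'(0⁺) = a`. -/
theorem le_linear_sub_rpow_add_rpow {b t a A B β γ : ℝ} {v v' v'' : ℝ → ℝ}
    (hβ : 1 < β) (hγ : 1 < γ) (hv : ContinuousOn v (Icc 0 b)) (hv0 : v 0 = 0)
    (hslope : Tendsto (fun s => v s / s) (𝓝[>] 0) (𝓝 a))
    (hv' : ∀ s ∈ Ioo 0 b, HasDerivAt v (v' s) s) (hv'' : ∀ s ∈ Ioo 0 b, HasDerivAt v' (v'' s) s)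
    (hle : ∀ s ∈ Ioo 0 b, v'' s ≤ -A * s ^ (β - 2) + B * s ^ (γ - 2)) (ht : t ∈ Ioc 0 b) :
    v t ≤ a * t - A * t ^ β / (β * (β - 1)) + B * t ^ γ / (γ * (γ - 1)) := by
  have hβ0 : β - 1 ≠ 0 := by linarith
  have hγ0 : γ - 1 ≠ 0 := by linarith
  have hcomp := le_of_hasDerivAt2_le
    (φ := fun x => a * x - A / (β - 1) / β * x ^ β + B / (γ - 1) / γ * x ^ γ)
    (φ' := fun x => a - A / (β - 1) * x ^ (β - 1) + B / (γ - 1) * x ^ (γ - 1))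
    (φ'' := fun x => -A * x ^ (β - 1 - 1) + B * x ^ (γ - 1 - 1)) hv ?cont ?zero ?slope hv' hv''
    (fun s hs => ?d1) (fun s hs => ?d2) (fun s hs => ?le) ht
  · exact hcomp.trans_eq (by field_simp)
  case cont => fun_prop (disch := positivity)
  case zero => simp [hv0, zero_rpow (by linarith : β ≠ 0), zero_rpow (by linarith : γ ≠ 0)]
  case d1 =>
    exact ((((hasDerivAt_id s).const_mul a).sub
      (hasDerivAt_div_mul_rpow (A / (β - 1)) (by linarith) hs.1)).add
      (hasDerivAt_div_mul_rpow (B / (γ - 1)) (by linarith) hs.1)).congr_deriv (by ring)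
  case d2 =>
    exact ((hasDerivAt_const s a).sub (hasDerivAt_div_mul_rpow A hβ0 hs.1)).add
      (hasDerivAt_div_mul_rpow B hγ0 hs.1) |>.congr_deriv (by ring)
  case le => simpa only [sub_sub, one_add_one_eq_two] using hle s hs
  case slope =>
    have hlim := ((hslope.sub_const a).add
      ((tendsto_rpow_nhdsGT_zero (sub_pos.2 hβ)).const_mul (A / (β - 1) / β))).sub
      ((tendsto_rpow_nhdsGT_zero (sub_pos.2 hγ)).const_mul (B / (γ - 1) / γ))
    rw [sub_self, mul_zero, mul_zero, add_zero, sub_zero] at hlim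
    refine hlim.congr' ?_
    filter_upwards [self_mem_nhdsWithin] with s (hs : 0 < s)
    rw [rpow_sub_one hs.ne', rpow_sub_one hs.ne']
    field_simp
    ring

theorem div_abs_rpow_add_one {u : ℝ} (hu : 0 < u) (q : ℝ) : u / |u| ^ (q + 1) = u ^ (-q) := by
  rw [abs_of_pos hu, rpow_add hu, rpow_one, rpow_neg hu.le]
  field_simp

theorem le_mul_rpow_neg_add {H x G a t h₀ h₁ C q αt : ℝ} (ha : 0 < a) (ht : 0 < t) (hx : 0 < x)
    (hxat : x ≤ a * t) (hq : 0 ≤ q) (hC : 0 ≤ C) (hG : -C ≤ G) (hh₀ : 0 ≤ h₀)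
    (hH₀ : h₀ * t ^ (-αt) ≤ H) (hH₁ : H ≤ h₁ * t ^ (-αt)) :
    h₀ / a ^ q * t ^ (-αt - q) - C * h₁ * t ^ (-αt) ≤ H * (x ^ (-q) + G) := by
  have hH : 0 ≤ H := (by positivity : 0 ≤ h₀ * t ^ (-αt)).trans hH₀
  have hsingular : h₀ / a ^ q * t ^ (-αt - q) ≤ H * x ^ (-q) :=
    calc h₀ / a ^ q * t ^ (-αt - q) = h₀ * t ^ (-αt) * (a * t) ^ (-q) := by
          rw [mul_rpow ha.le ht.le, rpow_neg ha.le, sub_eq_add_neg, rpow_add ht]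
          ring
      _ ≤ H * x ^ (-q) :=
          mul_le_mul hH₀ (rpow_le_rpow_of_nonpos hx hxat (neg_nonpos.2 hq)) (by positivity) hH
  have hregular : -(C * h₁ * t ^ (-αt)) ≤ H * G := by nlinarith
  linarith

theorem stmt_9_general
    (R₁ : ℝ)
    (f g₁ : ℝ → ℝ) (q : ℝ) (hq0 : 0 < q)
    (hH2 : ∀ u : ℝ, u ≠ 0 → f u = u / |u| ^ (q + 1) + g₁ u)
    (hfpos : ∀ w : ℝ, 0 < w → 0 < f w)
    (h : ℝ → ℝ)
    (a : ℝ) (ha : 0 < a) (v : ℝ → ℝ)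
    (hvcont : ContinuousOn v (Icc 0 R₁)) (hv0 : v 0 = 0)
    (hvslope : Tendsto (fun t => v t / t) (nhdsWithin 0 (Ioi 0)) (nhds a))
    (hvdiff : ∀ t ∈ Ioo (0 : ℝ) R₁, DifferentiableAt ℝ v t ∧ DifferentiableAt ℝ (deriv v) t)
    (hODE : ∀ t ∈ Ioo (0 : ℝ) R₁, v t ≠ 0 → deriv (deriv v) t + h t * f (v t) = 0)
    (αt : ℝ)
    (hαtq : αt < 1 - q)
    (h₀ h₁ : ℝ) (hh₀ : 0 < h₀)
    (hhbd : ∀ t ∈ Ioc (0 : ℝ) R₁, h₀ * t ^ (-αt) ≤ h t ∧ h t ≤ h₁ * t ^ (-αt))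
    (t₀ : ℝ) (ht₀ : t₀ ∈ Ioc (0 : ℝ) R₁)
    (hvpos : ∀ t ∈ Ioc (0 : ℝ) t₀, 0 < v t)
    (C : ℝ) (hC : 0 < C) (hg1C : ∀ s ∈ Icc (0 : ℝ) (a * R₁), -C ≤ g₁ s) :
    ∀ t ∈ Ioc (0 : ℝ) t₀, (0 < v t ∧ v t ≤ a * t) ∧
      v t ≤ a * t - h₀ * t ^ (2 - αt - q) / (a ^ q * (1 - αt - q) * (2 - αt - q)) +
        C * h₁ * t ^ (2 - αt) / ((1 - αt) * (2 - αt)) := by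
  obtain ⟨-, ht₀R₁⟩ := ht₀
  have hsub : ∀ s ∈ Ioo 0 t₀, s ∈ Ioc 0 R₁ := fun s hs => ⟨hs.1, hs.2.le.trans ht₀R₁⟩
  have hvpos' : ∀ s ∈ Ioo 0 t₀, 0 < v s := fun s hs => hvpos s (Ioo_subset_Ioc_self hs)
  have hvc : ContinuousOn v (Icc 0 t₀) := hvcont.mono (Icc_subset_Icc_right ht₀R₁)
  have hv' : ∀ s ∈ Ioo 0 t₀, HasDerivAt v (deriv v s) s :=
    fun s hs => (hvdiff s ⟨hs.1, hs.2.trans_le ht₀R₁⟩).1.hasDerivAt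
  have hv'' : ∀ s ∈ Ioo 0 t₀, HasDerivAt (deriv v) (deriv (deriv v) s) s :=
    fun s hs => (hvdiff s ⟨hs.1, hs.2.trans_le ht₀R₁⟩).2.hasDerivAt
  have hv''_eq : ∀ s ∈ Ioo 0 t₀, deriv (deriv v) s = -(h s * f (v s)) := fun s hs =>
    eq_neg_of_add_eq_zero_left (hODE s ⟨hs.1, hs.2.trans_le ht₀R₁⟩ (hvpos' s hs).ne')
  have hconcave : ∀ s ∈ Ioo 0 t₀, deriv (deriv v) s ≤ 0 := fun s hs => by
    have hh_pos : 0 < h s := (mul_pos hh₀ (rpow_pos_of_pos hs.1 _)).trans_le (hhbd s (hsub s hs)).1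
    simpa [hv''_eq s hs] using (mul_pos hh_pos (hfpos _ (hvpos' s hs))).le
  have hlin : ∀ t ∈ Ioc 0 t₀, v t ≤ a * t := fun t ht => by
    simpa using le_linear_sub_rpow_add_rpow (A := 0) (B := 0) (β := 2) (γ := 2) one_lt_two
      one_lt_two hvc hv0 hvslope hv' hv'' (by simpa using hconcave) ht
  have hbarrier : ∀ s ∈ Ioo 0 t₀, deriv (deriv v) s ≤
      -(h₀ / a ^ q) * s ^ (2 - αt - q - 2) + C * h₁ * s ^ (2 - αt - 2) := fun s hs => by
    have hvs : v s ≤ a * s := hlin s (Ioo_subset_Ioc_self hs)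
    rw [hv''_eq s hs, hH2 _ (hvpos' s hs).ne', div_abs_rpow_add_one (hvpos' s hs),
      show (2 - αt - q - 2 : ℝ) = -αt - q by ring, show (2 - αt - 2 : ℝ) = -αt by ring]
    have hg₁ := hg1C _ ⟨(hvpos' s hs).le, hvs.trans (by gcongr; exact (hsub s hs).2)⟩
    linarith [le_mul_rpow_neg_add ha hs.1 (hvpos' s hs) hvs hq0.le hC.le hg₁ hh₀.le
      (hhbd s (hsub s hs)).1 (hhbd s (hsub s hs)).2]
  intro t ht
  refine ⟨⟨hvpos t ht, hlin t ht⟩, ?_⟩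
  refine (le_linear_sub_rpow_add_rpow (by linarith) (by linarith) hvc hv0 hvslope hv' hv''
    hbarrier ht).trans_eq ?_
  field_simp
  ring

theorem stmt_9
    (N : ℕ) (hN : 2 < N)
    (R R₁ : ℝ) (hR : 0 < R) (hR₁ : R₁ = R ^ ((2 : ℝ) - N))
    (f g g₁ : ℝ → ℝ) (p q : ℝ) (hp : 1 < p) (hq0 : 0 < q) (hq1 : q < 1)
    (hodd : ∀ u : ℝ, f (-u) = - f u)
    (hfloclip : ∀ x : ℝ, x ≠ 0 → ∃ ε > (0 : ℝ), ∃ L : NNReal, LipschitzOnWith L f (Metric.ball x ε))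
    (hH1 : ∀ u : ℝ, u ≠ 0 → f u = |u| ^ (p - 1) * u + g u)
    (hglim : ∀ ε : ℝ, 0 < ε → ∃ M : ℝ, 0 < M ∧ ∀ u : ℝ, M ≤ |u| → |g u / |u| ^ p| ≤ ε)
    (hH2 : ∀ u : ℝ, u ≠ 0 → f u = u / |u| ^ (q + 1) + g₁ u)
    (hg1lip : LocallyLipschitz g₁) (hg10 : g₁ 0 = 0)
    (hfpos : ∀ w : ℝ, 0 < w → 0 < f w)
    (K : ℝ → ℝ) (K₀ K₁ α : ℝ) (hK₀ : 0 < K₀) (hK₁ : 0 < K₁)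
    (hα₁ : (N : ℝ) + q * ((N : ℝ) - 2) < α) (hα₂ : α < 2 * ((N : ℝ) - 1))
    (hKpos : ∀ r : ℝ, R ≤ r → 0 < K r)
    (hKdiff : ∀ r : ℝ, R ≤ r → DifferentiableAt ℝ K r)
    (hK'cont : ContinuousOn (deriv K) (Ici R))
    (hKlb : ∀ r : ℝ, R ≤ r → K₀ * r ^ (-α) ≤ K r)
    (hKub : ∀ r : ℝ, R ≤ r → K r ≤ K₁ * r ^ (-α))
    (hKratio : ∀ r : ℝ, R ≤ r → -(r * deriv K r / K r) < 2 * ((N : ℝ) - 1))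
    (hKlim : Tendsto (fun r => r * deriv K r / K r) atTop (nhds (-α)))
    (h : ℝ → ℝ)
    (hh : ∀ t : ℝ, t ∈ Ioc (0 : ℝ) R₁ →
      h t = t ^ (2 * ((N : ℝ) - 1) / (2 - (N : ℝ))) * K (t ^ (1 / (2 - (N : ℝ)))) / ((N : ℝ) - 2) ^ 2)
    (a : ℝ) (ha : 0 < a) (v : ℝ → ℝ)
    (hvcont : ContinuousOn v (Icc 0 R₁)) (hv0 : v 0 = 0)
    (hvslope : Tendsto (fun t => v t / t) (nhdsWithin 0 (Ioi 0)) (nhds a))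
    (hvdiff : ∀ t ∈ Ioo (0 : ℝ) R₁, DifferentiableAt ℝ v t ∧ DifferentiableAt ℝ (deriv v) t)
    (hODE : ∀ t ∈ Ioo (0 : ℝ) R₁, v t ≠ 0 → deriv (deriv v) t + h t * f (v t) = 0)
    (αt : ℝ) (hαt : αt = (2 * ((N : ℝ) - 1) - α) / ((N : ℝ) - 2))
    (hαt0 : 0 < αt) (hαtq : αt < 1 - q)
    (h₀ h₁ : ℝ) (hh₀ : 0 < h₀) (hh₁ : 0 < h₁)
    (hhbd : ∀ t ∈ Ioc (0 : ℝ) R₁, h₀ * t ^ (-αt) ≤ h t ∧ h t ≤ h₁ * t ^ (-αt))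
    (t₀ : ℝ) (ht₀ : t₀ ∈ Ioc (0 : ℝ) R₁)
    (hvpos : ∀ t ∈ Ioc (0 : ℝ) t₀, 0 < v t)
    (C : ℝ) (hC : 0 < C) (hg1C : ∀ s ∈ Icc (0 : ℝ) (a * R₁), -C ≤ g₁ s) :
    ∀ t ∈ Ioc (0 : ℝ) t₀, (0 < v t ∧ v t ≤ a * t) ∧
      v t ≤ a * t - h₀ * t ^ (2 - αt - q) / (a ^ q * (1 - αt - q) * (2 - αt - q)) +
        C * h₁ * t ^ (2 - αt) / ((1 - αt) * (2 - αt)) :=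
  stmt_9_general R₁ f g₁ q hq0 hH2 hfpos h a ha v hvcont hv0 hvslope hvdiff hODE αt hαtq h₀ h₁ hh₀
    hhbd t₀ ht₀ hvpos C hC hg1C
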